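/- arXiv:1702.04919 — 5 statements merged into one kernel-verified Lean document; each statement's English description precedes it below -/
import Mathlib

section
/- The coupling function admits the closed form Δ(k,k';l,l') = [k + k' = l + l'] · [(k−l) ∧ (k'−l) = 0] · f(k−l, k'−l) for all k,k',l,l' ∈ (ZMod d)^n, where [·] denotes the indicator of the stated condition. -/
open scoped BigOperators Classical ComplexOrder
open Finset MeasureTheory

noncomputable section

/-- Indicator (Kronecker delta) that two strings `k, l ∈ (ZMod d)^n` agree on all
positions in `A` (i.e. `k_A = l_A`). -/
def agree {d n : ℕ} (A : Finset (Fin n)) (k l : Fin n → ZMod d) : ℝ :=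
  if ∀ j ∈ A, k j = l j then 1 else 0

/-- Purity of a state `z` with respect to the bipartition `(A, Aᶜ)`:
`π_A(z) = ∑ z_k z_{k'} conj(z_l) conj(z_{l'}) [k'_A = l_A][k_A = l'_A][k_Ā = l_Ā][k'_Ā = l'_Ā]`. -/
def purity {d n : ℕ} [NeZero d] (A : Finset (Fin n)) (z : (Fin n → ZMod d) → ℂ) : ℂ :=
  ∑ k, ∑ k', ∑ l, ∑ l',
    z k * z k' * (starRingEnd ℂ) (z l) * (starRingEnd ℂ) (z l') *
      (agree A k' l : ℂ) * (agree A k l' : ℂ) * (agree Aᶜ k l : ℂ) * (agree Aᶜ k' l' : ℂ)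

/-- The potential of multipartite entanglement: the average of the purities over all
balanced bipartitions (`|A| = ⌊n/2⌋`). -/
def piME {d n : ℕ} [NeZero d] (z : (Fin n → ZMod d) → ℂ) : ℂ :=
  ((n.choose (n / 2) : ℂ))⁻¹ *
    ∑ A ∈ (Finset.univ : Finset (Fin n)).powersetCard (n / 2), purity A z

/-- A pure state of `n` qudits: a normalized vector of Fourier coefficients. -/
def IsPureState {d n : ℕ} [NeZero d] (z : (Fin n → ZMod d) → ℂ) : Prop :=
  ∑ k, ‖z k‖ ^ 2 = 1

/-- The coupling function `Δ(k,k';l,l')` (with balanced bipartition size `⌊n/2⌋`). -/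
def coupling {d n : ℕ} [NeZero d] (k k' l l' : Fin n → ZMod d) : ℝ :=
  (1 / 2) * ((n.choose (n / 2) : ℝ))⁻¹ *
    ∑ A ∈ (Finset.univ : Finset (Fin n)).powersetCard (n / 2),
      (agree A k' l * agree A k l' * agree Aᶜ k l * agree Aᶜ k' l' +
        agree A k' l' * agree A k l * agree Aᶜ k' l * agree Aᶜ k l')

/-- Hamming weight: the number of nonzero entries of a string. -/
def hw {d n : ℕ} (k : Fin n → ZMod d) : ℕ :=
  (Finset.univ.filter fun j => k j ≠ 0).card

/-- Binomial coefficient with integer arguments, with the convention that it vanishes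
if the lower argument is negative or exceeds the upper one. -/
def chooseZ (a b : ℤ) : ℕ :=
  if 0 ≤ b ∧ b ≤ a then a.toNat.choose b.toNat else 0

/-- The function `f(k,l)` appearing in the closed form of the coupling function. -/
def fcoup {d n : ℕ} [NeZero d] (k l : Fin n → ZMod d) : ℝ :=
  (1 / 2) * ((n.choose (n / 2) : ℝ))⁻¹ *
    ((chooseZ ((n : ℤ) - hw k - hw l) (((n / 2 : ℕ) : ℤ) - hw k) : ℝ) +
      (chooseZ ((n : ℤ) - hw k - hw l) (((n / 2 : ℕ) : ℤ) - hw l) : ℝ))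

lemma chooseZ_natCast (a b : ℕ) : chooseZ (a : ℤ) (b : ℤ) = a.choose b := by
  unfold chooseZ
  split_ifs with h
  · simp
  · push_neg at h
    have : a < b := by omega
    exact (Nat.choose_eq_zero_of_lt this).symm

lemma prod4_ite (P Q R T : Prop) [Decidable P] [Decidable Q] [Decidable R] [Decidable T] :
    (if P then (1:ℝ) else 0) * (if Q then (1:ℝ) else 0) * (if R then (1:ℝ) else 0) *
      (if T then (1:ℝ) else 0) = if P ∧ Q ∧ R ∧ T then (1:ℝ) else 0 := by
  split_ifs <;> simp_all

lemma card_between {n : ℕ} (m : ℕ) (S T : Finset (Fin n)) (hST : Disjoint S T) :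
    (((Finset.univ : Finset (Fin n)).powersetCard m).filter
      (fun A => S ⊆ A ∧ Disjoint T A)).card
      = chooseZ ((n:ℤ) - S.card - T.card) ((m:ℤ) - S.card) := by
  have hn : S.card + T.card ≤ n := by
    have h1 := Finset.card_le_univ (S ∪ T)
    rw [card_union_of_disjoint hST] at h1
    simpa using h1
  rcases lt_or_ge m S.card with hm | hm
  · rw [Finset.card_eq_zero.mpr, chooseZ, if_neg]
    · simp; omega
    · rw [Finset.filter_eq_empty_iff]
      rintro A hA ⟨hSA, -⟩
      rw [mem_powersetCard] at hA
      have := Finset.card_le_card hSA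
      omega
  · have key : (((Finset.univ : Finset (Fin n)).powersetCard m).filter
        (fun A => S ⊆ A ∧ Disjoint T A)).card
        = (((Finset.univ \ S) \ T).powersetCard (m - S.card)).card := by
      apply Finset.card_bij (fun A _ => A \ S)
      · rintro A hA
        rw [Finset.mem_filter, mem_powersetCard] at hA
        obtain ⟨⟨-, hcard⟩, hSA, hTA⟩ := hA
        rw [mem_powersetCard]
        refine ⟨?_, ?_⟩
        · intro x hx
          rw [Finset.mem_sdiff] at hx ⊢
          rw [Finset.mem_sdiff]
          refine ⟨⟨Finset.mem_univ x, hx.2⟩, ?_⟩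
          exact fun hxT => (Finset.disjoint_left.mp hTA hxT) hx.1
        · rw [Finset.card_sdiff_of_subset hSA, hcard]
      · rintro A hA A' hA' h
        rw [Finset.mem_filter, mem_powersetCard] at hA hA'
        have h1 : A = (A \ S) ∪ S := by
          rw [Finset.sdiff_union_self_eq_union, Finset.union_eq_left.mpr hA.2.1]
        have h2 : A' = (A' \ S) ∪ S := by
          rw [Finset.sdiff_union_self_eq_union, Finset.union_eq_left.mpr hA'.2.1]
        rw [h1, h2, h]
      · rintro B hB
        rw [mem_powersetCard] at hB
        obtain ⟨hBsub, hBcard⟩ := hB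
        have hBS : Disjoint B S := by
          rw [Finset.disjoint_left]
          intro x hx
          have := hBsub hx
          rw [Finset.mem_sdiff, Finset.mem_sdiff] at this
          exact this.1.2
        have hBT : Disjoint B T := by
          rw [Finset.disjoint_left]
          intro x hx
          have := hBsub hx
          rw [Finset.mem_sdiff] at this
          exact this.2
        refine ⟨B ∪ S, ?_, ?_⟩
        · rw [Finset.mem_filter, mem_powersetCard]
          refine ⟨⟨Finset.subset_univ _, ?_⟩, Finset.subset_union_right, ?_⟩
          · rw [card_union_of_disjoint hBS, hBcard]; omega
          · exact Finset.disjoint_union_right.mpr ⟨hBT.symm, hST.symm⟩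
        · rw [Finset.union_sdiff_right, Finset.sdiff_eq_self_iff_disjoint.mpr hBS]
    rw [key, Finset.card_powersetCard]
    have hcard : ((Finset.univ \ S) \ T).card = n - S.card - T.card := by
      rw [Finset.card_sdiff_of_subset, Finset.card_sdiff_of_subset (Finset.subset_univ S)]
      · simp
      · intro x hx
        rw [Finset.mem_sdiff]
        exact ⟨Finset.mem_univ x, Finset.disjoint_left.mp hST.symm hx⟩
    rw [hcard]
    have e1 : (n:ℤ) - S.card - T.card = ((n - S.card - T.card : ℕ) : ℤ) := by omega
    have e2 : (m:ℤ) - S.card = ((m - S.card : ℕ) : ℤ) := by omega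
    rw [e1, e2, chooseZ_natCast]

/-- Closed form of the coupling function:
`Δ(k,k';l,l') = [k + k' = l + l'] · [(k-l) ∧ (k'-l) = 0] · f(k-l, k'-l)`,
where `∧` is the componentwise minimum of the representatives in `{0,…,d-1}`. -/
theorem coupling_closed_form (d n : ℕ) [NeZero d] (hd : 2 ≤ d) (hn : 1 ≤ n)
    (k k' l l' : Fin n → ZMod d) :
    coupling k k' l l' =
      (if k + k' = l + l' then (1 : ℝ) else 0) *
        (if ∀ j, min ((k j - l j).val) ((k' j - l j).val) = 0 then (1 : ℝ) else 0) *
        fcoup (k - l) (k' - l) := by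
  classical
  set m := n / 2 with hm
  set Sa := (Finset.univ : Finset (Fin n)).filter (fun j => k j - l j ≠ 0) with hSa
  set Sb := (Finset.univ : Finset (Fin n)).filter (fun j => k' j - l j ≠ 0) with hSb
  have hwa : hw (k - l) = Sa.card := by
    simp only [hw, hSa, Pi.sub_apply]
  have hwb : hw (k' - l) = Sb.card := by
    simp only [hw, hSb, Pi.sub_apply]
  have expand : coupling k k' l l' = (1 / 2) * ((n.choose m : ℝ))⁻¹ *
      ∑ A ∈ (Finset.univ : Finset (Fin n)).powersetCard m,
        ((if ((∀ j ∈ A, k' j = l j) ∧ (∀ j ∈ A, k j = l' j) ∧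
              (∀ j ∈ Aᶜ, k j = l j) ∧ (∀ j ∈ Aᶜ, k' j = l' j)) then (1:ℝ) else 0) +
         (if ((∀ j ∈ A, k' j = l' j) ∧ (∀ j ∈ A, k j = l j) ∧
              (∀ j ∈ Aᶜ, k' j = l j) ∧ (∀ j ∈ Aᶜ, k j = l' j)) then (1:ℝ) else 0)) := by
    unfold coupling agree
    congr 1
    apply Finset.sum_congr rfl
    intro A _
    rw [prod4_ite, prod4_ite]
  by_cases hsum : k + k' = l + l'
  · have hsum' : ∀ j, k j + k' j = l j + l' j := fun j => congrFun hsum j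
    by_cases hmin : ∀ j, min ((k j - l j).val) ((k' j - l j).val) = 0
    · have hdis : Disjoint Sa Sb := by
        rw [Finset.disjoint_left]
        intro j hj hj'
        rw [hSa, Finset.mem_filter] at hj
        rw [hSb, Finset.mem_filter] at hj'
        have := hmin j
        rcases Nat.min_eq_zero_iff.mp this with h | h
        · exact hj.2 ((ZMod.val_eq_zero _).mp h)
        · exact hj'.2 ((ZMod.val_eq_zero _).mp h)
      rw [if_pos hsum, if_pos hmin, one_mul, one_mul, expand]
      have cond1 : ∀ A : Finset (Fin n),
          ((∀ j ∈ A, k' j = l j) ∧ (∀ j ∈ A, k j = l' j) ∧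
            (∀ j ∈ Aᶜ, k j = l j) ∧ (∀ j ∈ Aᶜ, k' j = l' j)) ↔
          (Sa ⊆ A ∧ Disjoint Sb A) := by
        intro A
        constructor
        · rintro ⟨h1, h2, h3, h4⟩
          constructor
          · intro j hj
            rw [hSa, Finset.mem_filter] at hj
            by_contra hjA
            exact hj.2 (sub_eq_zero.mpr (h3 j (Finset.mem_compl.mpr hjA)))
          · rw [Finset.disjoint_left]
            intro j hj hjA
            rw [hSb, Finset.mem_filter] at hj
            exact hj.2 (sub_eq_zero.mpr (h1 j hjA))
        · rintro ⟨hSaA, hdisbA⟩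
          have h1 : ∀ j ∈ A, k' j = l j := by
            intro j hj
            by_contra hne
            exact (Finset.disjoint_left.mp hdisbA
              (by rw [hSb, Finset.mem_filter]; exact ⟨Finset.mem_univ j, sub_ne_zero.mpr hne⟩)) hj
          have h3 : ∀ j ∈ Aᶜ, k j = l j := by
            intro j hj
            rw [Finset.mem_compl] at hj
            by_contra hne
            exact hj (hSaA (by rw [hSa, Finset.mem_filter]; exact ⟨Finset.mem_univ j, sub_ne_zero.mpr hne⟩))
          refine ⟨h1, ?_, h3, ?_⟩
          · intro j hj
            have := hsum' j
            rw [h1 j hj] at this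
            rw [add_comm (k j)] at this
            exact add_left_cancel this
          · intro j hj
            have := hsum' j
            rw [h3 j hj] at this
            exact add_left_cancel this
      have cond2 : ∀ A : Finset (Fin n),
          ((∀ j ∈ A, k' j = l' j) ∧ (∀ j ∈ A, k j = l j) ∧
            (∀ j ∈ Aᶜ, k' j = l j) ∧ (∀ j ∈ Aᶜ, k j = l' j)) ↔
          (Sb ⊆ A ∧ Disjoint Sa A) := by
        intro A
        constructor
        · rintro ⟨h1, h2, h3, h4⟩
          constructor
          · intro j hj
            rw [hSb, Finset.mem_filter] at hj
            by_contra hjA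
            exact hj.2 (sub_eq_zero.mpr (h3 j (Finset.mem_compl.mpr hjA)))
          · rw [Finset.disjoint_left]
            intro j hj hjA
            rw [hSa, Finset.mem_filter] at hj
            exact hj.2 (sub_eq_zero.mpr (h2 j hjA))
        · rintro ⟨hSbA, hdisaA⟩
          have h2 : ∀ j ∈ A, k j = l j := by
            intro j hj
            by_contra hne
            exact (Finset.disjoint_left.mp hdisaA
              (by rw [hSa, Finset.mem_filter]; exact ⟨Finset.mem_univ j, sub_ne_zero.mpr hne⟩)) hj
          have h3 : ∀ j ∈ Aᶜ, k' j = l j := by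
            intro j hj
            rw [Finset.mem_compl] at hj
            by_contra hne
            exact hj (hSbA (by rw [hSb, Finset.mem_filter]; exact ⟨Finset.mem_univ j, sub_ne_zero.mpr hne⟩))
          refine ⟨?_, h2, h3, ?_⟩
          · intro j hj
            have := hsum' j
            rw [h2 j hj] at this
            exact add_left_cancel this
          · intro j hj
            have := hsum' j
            rw [h3 j hj] at this
            rw [add_comm (k j)] at this
            exact add_left_cancel this
      have hsum_eq : ∑ A ∈ (Finset.univ : Finset (Fin n)).powersetCard m,
          ((if ((∀ j ∈ A, k' j = l j) ∧ (∀ j ∈ A, k j = l' j) ∧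
                (∀ j ∈ Aᶜ, k j = l j) ∧ (∀ j ∈ Aᶜ, k' j = l' j)) then (1:ℝ) else 0) +
           (if ((∀ j ∈ A, k' j = l' j) ∧ (∀ j ∈ A, k j = l j) ∧
                (∀ j ∈ Aᶜ, k' j = l j) ∧ (∀ j ∈ Aᶜ, k j = l' j)) then (1:ℝ) else 0))
          = (chooseZ ((n:ℤ) - Sa.card - Sb.card) ((m:ℤ) - Sa.card) : ℝ)
            + (chooseZ ((n:ℤ) - Sb.card - Sa.card) ((m:ℤ) - Sb.card) : ℝ) := by
        rw [Finset.sum_add_distrib]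
        congr 1
        · rw [Finset.sum_congr rfl (fun A _ => by rw [if_congr (cond1 A) rfl rfl]),
            Finset.sum_boole, card_between m Sa Sb hdis]
        · rw [Finset.sum_congr rfl (fun A _ => by rw [if_congr (cond2 A) rfl rfl]),
            Finset.sum_boole, card_between m Sb Sa hdis.symm]
      rw [hsum_eq]
      unfold fcoup
      rw [hwa, hwb]
      have : (n:ℤ) - Sb.card - Sa.card = (n:ℤ) - Sa.card - Sb.card := by ring
      rw [this]
    · rw [if_neg hmin, mul_zero, zero_mul, expand]
      push_neg at hmin
      obtain ⟨j0, hj0⟩ := hmin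
      have ha : k j0 ≠ l j0 := by
        intro h
        apply hj0
        simp [sub_eq_zero.mpr h]
      have hb : k' j0 ≠ l j0 := by
        intro h
        apply hj0
        simp [sub_eq_zero.mpr h]
      rw [Finset.sum_eq_zero, mul_zero]
      intro A _
      rw [if_neg, if_neg, add_zero]
      · rintro ⟨h1, h2, h3, h4⟩
        by_cases hj : j0 ∈ A
        · exact ha (h2 j0 hj)
        · exact hb (h3 j0 (Finset.mem_compl.mpr hj))
      · rintro ⟨h1, h2, h3, h4⟩
        by_cases hj : j0 ∈ A
        · exact hb (h1 j0 hj)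
        · exact ha (h3 j0 (Finset.mem_compl.mpr hj))
  · rw [if_neg hsum, zero_mul, zero_mul, expand]
    rw [Finset.sum_eq_zero, mul_zero]
    intro A _
    rw [if_neg, if_neg, add_zero]
    all_goals
      rintro ⟨h1, h2, h3, h4⟩
      apply hsum
      funext j
      by_cases hj : j ∈ A
      · show k j + k' j = l j + l' j
        rw [h1 j hj, h2 j hj]; all_goals abel
      · show k j + k' j = l j + l' j
        rw [h3 j (Finset.mem_compl.mpr hj), h4 j (Finset.mem_compl.mpr hj)]; all_goals abel
end
end

section
/- The coupling function Δ is invariant under the action of the semidirect product S_d^n ⋊ S_n: for all permutations p_1,…,p_n of ZMod d and every permutation q of {1,…,n}, letting g act on strings by (g·k)_j = p_j(k_{q(j)}), one has Δ(g·k, g·k'; g·l, g·l') = Δ(k,k';l,l') for all k,k',l,l' ∈ (ZMod d)^n. -/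
open scoped BigOperators Classical ComplexOrder
open Finset MeasureTheory

noncomputable section

lemma agree_perm {d n : ℕ} (A : Finset (Fin n)) (p : Fin n → Equiv.Perm (ZMod d))
    (q : Equiv.Perm (Fin n)) (k l : Fin n → ZMod d) :
    agree A (fun j => p j (k (q j))) (fun j => p j (l (q j))) = agree (A.image q) k l := by
  unfold agree
  congr 1
  simp only [eq_iff_iff, Finset.mem_image]
  constructor
  · rintro h j ⟨i, hi, rfl⟩
    exact (p i).injective (h i hi)
  · intro h j hj
    exact congrArg (p j) (h (q j) ⟨j, hj, rfl⟩)

lemma compl_image_perm {n : ℕ} (A : Finset (Fin n)) (q : Equiv.Perm (Fin n)) :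
    (A.image q)ᶜ = Aᶜ.image q := by
  ext x
  simp only [Finset.mem_compl, Finset.mem_image]
  constructor
  · intro h
    exact ⟨q.symm x, fun hm => h ⟨_, hm, q.apply_symm_apply x⟩, q.apply_symm_apply x⟩
  · rintro ⟨i, hi, rfl⟩ ⟨j, hj, hji⟩
    exact hi (q.injective hji ▸ hj)

/-- The coupling function `Δ` is invariant under the action of
`S_d^n ⋊ S_n` given by `(g·k)_j = p_j(k_{q(j)})`. -/
theorem coupling_invariant (d n : ℕ) [NeZero d] (hd : 2 ≤ d) (hn : 1 ≤ n)
    (p : Fin n → Equiv.Perm (ZMod d)) (q : Equiv.Perm (Fin n))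
    (k k' l l' : Fin n → ZMod d) :
    coupling (fun j => p j (k (q j))) (fun j => p j (k' (q j)))
        (fun j => p j (l (q j))) (fun j => p j (l' (q j))) =
      coupling k k' l l' := by
  unfold coupling
  congr 1
  simp only [agree_perm, compl_image_perm]
  refine Finset.sum_nbij' (fun A => A.image q) (fun A => A.image q.symm) ?_ ?_ ?_ ?_ ?_
  · intro A hA
    simp only [Finset.mem_powersetCard_univ] at hA ⊢
    rw [Finset.card_image_of_injective _ q.injective, hA]
  · intro A hA
    simp only [Finset.mem_powersetCard_univ] at hA ⊢
    rw [Finset.card_image_of_injective _ q.symm.injective, hA]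
  · intro A _
    ext x
    simp
  · intro A _
    ext x
    simp
  · intro A _
    rw [compl_image_perm]
end
end

section
/- Leaf lemma: for all fixed strings k', l' ∈ (ZMod d)^n, the sum of the coupling function over the repeated argument equals ∑_{k ∈ (ZMod d)^n} Δ(k, k'; k, l') = [k' = l'] · (d^{⌊n/2⌋} + d^{⌈n/2⌉})/2, where [·] denotes the indicator. -/
open scoped BigOperators Classical ComplexOrder
open Finset MeasureTheory

noncomputable section

lemma agree_refl {d n : ℕ} (A : Finset (Fin n)) (k : Fin n → ZMod d) :
    agree A k k = 1 := by
  simp [agree]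

lemma sum_agree {d n : ℕ} [NeZero d] (S : Finset (Fin n)) (a b : Fin n → ZMod d) :
    ∑ k : Fin n → ZMod d, agree S a k * agree S k b = agree S a b * (d : ℝ) ^ Sᶜ.card := by
  have h : ∀ k : Fin n → ZMod d, agree S a k * agree S k b
      = ∏ j, ((if j ∈ S → a j = k j then (1 : ℝ) else 0) *
          (if j ∈ S → k j = b j then (1 : ℝ) else 0)) := by
    intro k
    rw [Finset.prod_mul_distrib, Fintype.prod_boole, Fintype.prod_boole]
    simp [agree]
    split_ifs <;> rfl
  simp only [h]
  rw [← Fintype.prod_sum fun j (x : ZMod d) =>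
      ((if j ∈ S → a j = x then (1 : ℝ) else 0) * (if j ∈ S → x = b j then (1 : ℝ) else 0))]
  rw [← Finset.prod_mul_prod_compl S]
  have h1 : ∀ j ∈ S, (∑ x : ZMod d,
      ((if j ∈ S → a j = x then (1 : ℝ) else 0) * (if j ∈ S → x = b j then (1 : ℝ) else 0)))
      = if a j = b j then (1 : ℝ) else 0 := by
    intro j hj
    simp only [hj, forall_true_left, true_implies, ite_mul, one_mul, zero_mul]
    rw [Finset.sum_ite_eq]
    simp
  have h2 : ∀ j ∈ Sᶜ, (∑ x : ZMod d,
      ((if j ∈ S → a j = x then (1 : ℝ) else 0) * (if j ∈ S → x = b j then (1 : ℝ) else 0)))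
      = (d : ℝ) := by
    intro j hj
    have hj' : j ∉ S := Finset.mem_compl.mp hj
    simp [hj', ZMod.card]
  rw [Finset.prod_congr rfl h1, Finset.prod_congr rfl h2, Finset.prod_const]
  rw [Finset.prod_boole]
  simp [agree]

lemma agree_mul_compl {d n : ℕ} (S : Finset (Fin n)) (a b : Fin n → ZMod d) :
    agree S a b * agree Sᶜ a b = if a = b then (1 : ℝ) else 0 := by
  unfold agree
  by_cases h : a = b
  · simp [h]
  · rw [if_neg h]
    by_cases h1 : ∀ j ∈ S, a j = b j
    · rw [if_pos h1, one_mul, if_neg]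
      intro h2
      exact h (funext fun j => by
        by_cases hj : j ∈ S
        · exact h1 j hj
        · exact h2 j (Finset.mem_compl.mpr hj))
    · simp [h1]

/-- Leaf lemma: for all fixed strings `k', l'`,
`∑_k Δ(k,k';k,l') = [k' = l'] · (d^{⌊n/2⌋} + d^{⌈n/2⌉})/2`. -/
theorem leaf_lemma (d n : ℕ) [NeZero d] (hd : 2 ≤ d) (hn : 1 ≤ n)
    (k' l' : Fin n → ZMod d) :
    ∑ k, coupling k k' k l' =
      (if k' = l' then (1 : ℝ) else 0) *
        (((d : ℝ) ^ (n / 2) + (d : ℝ) ^ ((n + 1) / 2)) / 2) := by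
  have key : ∀ A ∈ (Finset.univ : Finset (Fin n)).powersetCard (n / 2),
      (∑ k : Fin n → ZMod d,
        (agree A k' k * agree A k l' * agree Aᶜ k k * agree Aᶜ k' l' +
          agree A k' l' * agree A k k * agree Aᶜ k' k * agree Aᶜ k l'))
      = (if k' = l' then (1 : ℝ) else 0) * ((d : ℝ) ^ (n / 2) + (d : ℝ) ^ ((n + 1) / 2)) := by
    intro A hA
    have hcard : A.card = n / 2 := (Finset.mem_powersetCard.mp hA).2
    have hcardc : Aᶜ.card = (n + 1) / 2 := by
      rw [Finset.card_compl, Fintype.card_fin, hcard]; omega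
    rw [Finset.sum_add_distrib]
    simp only [agree_refl, mul_one, one_mul]
    have e1 : ∑ k : Fin n → ZMod d, agree A k' k * agree A k l' * agree Aᶜ k' l'
        = agree A k' l' * (d : ℝ) ^ Aᶜ.card * agree Aᶜ k' l' := by
      rw [← Finset.sum_mul, sum_agree]
    have e2 : ∑ k : Fin n → ZMod d, agree A k' l' * (agree Aᶜ k' k * agree Aᶜ k l')
        = agree A k' l' * (agree Aᶜ k' l' * (d : ℝ) ^ A.card) := by
      rw [← Finset.mul_sum, sum_agree, compl_compl]
    have e2' : ∀ k : Fin n → ZMod d,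
        agree A k' l' * agree Aᶜ k' k * agree Aᶜ k l'
          = agree A k' l' * (agree Aᶜ k' k * agree Aᶜ k l') := fun k => by ring
    rw [e1, Finset.sum_congr rfl fun k _ => e2' k, e2, hcard, hcardc]
    have hm := agree_mul_compl A k' l'
    linear_combination ((d : ℝ) ^ ((n + 1) / 2) + (d : ℝ) ^ (n / 2)) * hm
  simp only [coupling]
  rw [← Finset.mul_sum, Finset.sum_comm, Finset.sum_congr rfl key, Finset.sum_const,
    Finset.card_powersetCard, Finset.card_univ, Fintype.card_fin, nsmul_eq_mul]
  have hC : (0 : ℝ) < (n.choose (n / 2) : ℝ) :=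
    Nat.cast_pos.mpr (Nat.choose_pos (Nat.div_le_self n 2))
  field_simp
end
end

section
/- If z is a pure state of n qudits and B ⊆ A ⊆ {1,…,n} are subsets such that the purity with respect to A is minimal, π_A(z) = 1/d^{|A|}, then the purity with respect to B is also minimal: π_B(z) = 1/d^{|B|}. In particular, a state whose purity equals 1/d^{⌊n/2⌋} for every balanced bipartition (|A| = ⌊n/2⌋) has minimal purity 1/d^{|B|} for every bipartition with |B| ≤ ⌊n/2⌋. -/
/-!
Split a string into its `B`-part and the rest and view `z` as a matrix `M` with rows indexed
by the `B`-part; then `π_B(z) = ‖M Mᴴ‖²` (Frobenius norm). Since `tr (M Mᴴ) = 1`, Cauchy–Schwarz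
on the diagonal gives `π_B(z) ≥ 1/d^{|B|}`. Conversely, moving the `(A \ B)`-part of the string
from the columns to the rows turns `M` into the matrix `N` with `π_A(z) = ‖N Nᴴ‖²`, and every
entry of `M Mᴴ` is a sum of `d^{|A \ B|}` entries of `N Nᴴ`, so
`π_B(z) ≤ d^{|A \ B|} π_A(z) = 1/d^{|B|}`.
-/

open scoped BigOperators Classical ComplexOrder
open Finset MeasureTheory

noncomputable section

theorem sq_norm_sum_le_card_mul_sum_sq_norm {ι E : Type*} [Fintype ι] [SeminormedAddCommGroup E]
    (t : ι → E) : ‖∑ i, t i‖ ^ 2 ≤ Fintype.card ι * ∑ i, ‖t i‖ ^ 2 :=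
  calc ‖∑ i, t i‖ ^ 2 ≤ (∑ i, ‖t i‖) ^ 2 := by gcongr; exact norm_sum_le _ _
    _ ≤ _ := sq_sum_le_card_mul_sum_sq

namespace Matrix

variable {P Q : Type*} [Fintype Q]

/-- For the bipartite pure state with coefficient matrix `M`, the reduced density matrix is
`M * Mᴴ`, and its purity `tr ((M * Mᴴ)²)` is the sum of the squared moduli of its entries. -/
def bipartitePurity [Fintype P] (M : Matrix P Q ℂ) : ℝ :=
  ∑ p, ∑ p', ‖(M * Mᴴ) p p'‖ ^ 2

theorem mul_conjTranspose_apply_self (M : Matrix P Q ℂ) (p : P) :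
    (M * Mᴴ) p p = ((∑ q, ‖M p q‖ ^ 2 : ℝ) : ℂ) := by
  simp [mul_apply, Complex.mul_conj, Complex.normSq_eq_norm_sq]

theorem inv_card_le_bipartitePurity [Fintype P] (M : Matrix P Q ℂ)
    (hM : ∑ p, ∑ q, ‖M p q‖ ^ 2 = 1) :
    (Fintype.card P : ℝ)⁻¹ ≤ bipartitePurity M := by
  set s : P → ℝ := fun p => ∑ q, ‖M p q‖ ^ 2
  have hcard : (0 : ℝ) < Fintype.card P := by
    rcases isEmpty_or_nonempty P with hP | hP
    · simp at hM
    · exact_mod_cast Fintype.card_pos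
  have diag_le : ∑ p, s p ^ 2 ≤ bipartitePurity M := by
    refine sum_le_sum fun p _ => ?_
    have hp : ‖(M * Mᴴ) p p‖ ^ 2 = s p ^ 2 := by
      rw [mul_conjTranspose_apply_self, Complex.norm_real, Real.norm_eq_abs, sq_abs]
    rw [← hp]
    exact single_le_sum (f := fun p' => ‖(M * Mᴴ) p p'‖ ^ 2) (fun _ _ => sq_nonneg _)
      (mem_univ p)
  have cauchy_schwarz : (∑ p, s p) ^ 2 ≤ Fintype.card P * ∑ p, s p ^ 2 :=
    sq_sum_le_card_mul_sum_sq
  rw [inv_le_iff_one_le_mul₀' hcard]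
  calc (1 : ℝ) = (∑ p, s p) ^ 2 := by rw [hM, one_pow]
    _ ≤ _ := cauchy_schwarz
    _ ≤ _ := by gcongr

theorem bipartitePurity_le_card_mul {X Y C : Type*} [Fintype X] [Fintype Y] [Fintype C]
    (M : Matrix X (Y × C) ℂ) :
    bipartitePurity M ≤
      Fintype.card Y * bipartitePurity (of fun (p : X × Y) c => M p.1 (p.2, c)) := by
  set N : Matrix (X × Y) C ℂ := of fun p c => M p.1 (p.2, c)
  have partial_trace : ∀ x x', (M * Mᴴ) x x' = ∑ y, (N * Nᴴ) (x, y) (x', y) := by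
    intro x x'
    simp [N, mul_apply, Fintype.sum_prod_type]
  have entry_le : ∀ x x', ‖(M * Mᴴ) x x'‖ ^ 2 ≤
      Fintype.card Y * ∑ y, ∑ y', ‖(N * Nᴴ) (x, y) (x', y')‖ ^ 2 := by
    intro x x'
    rw [partial_trace]
    refine (sq_norm_sum_le_card_mul_sum_sq_norm _).trans ?_
    gcongr with y
    exact single_le_sum (f := fun y' => ‖(N * Nᴴ) (x, y) (x', y')‖ ^ 2)
      (fun _ _ => sq_nonneg _) (mem_univ y)
  calc bipartitePurity M
      ≤ ∑ x, ∑ x', Fintype.card Y * ∑ y, ∑ y', ‖(N * Nᴴ) (x, y) (x', y')‖ ^ 2 :=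
        sum_le_sum fun x _ => sum_le_sum fun x' _ => entry_le x x'
    _ = Fintype.card Y * bipartitePurity N := by
        simp only [bipartitePurity, Fintype.sum_prod_type, ← mul_sum]
        congr 1
        exact sum_congr rfl fun x _ => sum_comm

end Matrix

section Strings

variable {d n : ℕ}

theorem agree_eq_ite {R : Type*} (S : Finset (Fin n)) (f : (Fin n → ZMod d) → R)
    (hf : ∀ u v, f u = f v ↔ ∀ j ∈ S, u j = v j) (u v : Fin n → ZMod d) :
    ((agree S u v : ℝ) : ℂ) = if f u = f v then 1 else 0 := by
  simp only [agree, ← hf]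
  split_ifs <;> simp

theorem purity_eq_bipartitePurity [NeZero d] {P Q : Type*} [Fintype P] [Fintype Q]
    (A : Finset (Fin n)) (z : (Fin n → ZMod d) → ℂ) (e : (Fin n → ZMod d) ≃ P × Q)
    (he₁ : ∀ u v, (e u).1 = (e v).1 ↔ ∀ j ∈ A, u j = v j)
    (he₂ : ∀ u v, (e u).2 = (e v).2 ↔ ∀ j ∈ Aᶜ, u j = v j) :
    purity A z = (Matrix.of fun p q => z (e.symm (p, q))).bipartitePurity := by
  simp only [purity, agree_eq_ite A _ he₁, agree_eq_ite Aᶜ _ he₂, ← e.symm.sum_comp,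
    Equiv.apply_symm_apply, Fintype.sum_prod_type]
  simp only [mul_ite, mul_one, mul_zero, sum_ite_eq, mem_univ, if_true, sum_ite_irrel,
    sum_const_zero]
  simp only [Matrix.bipartitePurity, Complex.ofReal_sum]
  refine sum_congr rfl fun p _ => ?_
  rw [sum_comm]
  refine sum_congr rfl fun p' _ => ?_
  rw [Complex.sq_norm, ← Complex.mul_conj, Matrix.mul_apply, map_sum, sum_mul_sum]
  refine sum_congr rfl fun q _ => sum_congr rfl fun q' _ => ?_
  simp only [Matrix.of_apply, Matrix.conjTranspose_apply, map_mul, Complex.star_def,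
    Complex.conj_conj]
  ring

end Strings

section Split

variable {ι α : Type*} [DecidableEq ι] {A B : Finset ι}

def splitThree (hBA : B ⊆ A) :
    (ι → α) ≃ ({j // j ∈ B} → α) × ({j // j ∈ A \ B} → α) × ({j // j ∉ A} → α) where
  toFun u := (fun j => u j, fun j => u j, fun j => u j)
  invFun p j :=
    if hB : j ∈ B then p.1 ⟨j, hB⟩
    else if hA : j ∈ A then p.2.1 ⟨j, mem_sdiff.mpr ⟨hA, hB⟩⟩
    else p.2.2 ⟨j, hA⟩
  left_inv u := by
    funext j
    by_cases hB : j ∈ B <;> by_cases hA : j ∈ A <;> simp [hB, hA]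
  right_inv p := by
    ext j
    · simp [j.2]
    · simp [(mem_sdiff.mp j.2).1, (mem_sdiff.mp j.2).2]
    · have hB : (j : ι) ∉ B := fun hB => j.2 (hBA hB)
      simp [j.2, hB]

variable (hBA : B ⊆ A)

theorem splitThree_fst_eq_iff (u v : ι → α) :
    (splitThree hBA u).1 = (splitThree hBA v).1 ↔ ∀ j ∈ B, u j = v j := by
  simp [splitThree, funext_iff]

theorem splitThree_snd_eq_iff [Fintype ι] (u v : ι → α) :
    (splitThree hBA u).2 = (splitThree hBA v).2 ↔ ∀ j ∈ Bᶜ, u j = v j := by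
  simp only [splitThree, Equiv.coe_fn_mk, Prod.ext_iff, funext_iff, Subtype.forall, mem_sdiff,
    and_imp, mem_compl]
  grind

theorem splitThree_fst_snd_fst_eq_iff (u v : ι → α) :
    ((splitThree hBA u).1, (splitThree hBA u).2.1) =
        ((splitThree hBA v).1, (splitThree hBA v).2.1) ↔ ∀ j ∈ A, u j = v j := by
  simp only [splitThree, Equiv.coe_fn_mk, Prod.mk.injEq, funext_iff, Subtype.forall, mem_sdiff,
    and_imp]
  grind

theorem splitThree_snd_snd_eq_iff [Fintype ι] (u v : ι → α) :
    (splitThree hBA u).2.2 = (splitThree hBA v).2.2 ↔ ∀ j ∈ Aᶜ, u j = v j := by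
  simp [splitThree, funext_iff]

end Split

theorem purity_eq_one_div_pow_card_of_subset {d n : ℕ} [NeZero d] {A B : Finset (Fin n)}
    (hBA : B ⊆ A) {z : (Fin n → ZMod d) → ℂ} (hz : IsPureState z)
    (hA : purity A z = 1 / (d : ℂ) ^ A.card) :
    purity B z = 1 / (d : ℂ) ^ B.card := by
  set E := splitThree (α := ZMod d) hBA
  set M : Matrix _ _ ℂ := Matrix.of fun p q => z (E.symm (p, q))
  have purity_B : purity B z = M.bipartitePurity :=
    purity_eq_bipartitePurity B z E (splitThree_fst_eq_iff hBA) (splitThree_snd_eq_iff hBA)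
  set N : Matrix _ _ ℂ := Matrix.of fun (p : _ × _) c => M p.1 (p.2, c)
  have purity_A : purity A z = N.bipartitePurity :=
    purity_eq_bipartitePurity A z (E.trans (Equiv.prodAssoc _ _ _).symm)
      (splitThree_fst_snd_fst_eq_iff hBA) (splitThree_snd_snd_eq_iff hBA)
  have normalized : ∑ p, ∑ q, ‖M p q‖ ^ 2 = 1 := by
    rw [← hz, ← E.symm.sum_comp, Fintype.sum_prod_type]
    rfl
  have purity_N : N.bipartitePurity = 1 / (d : ℝ) ^ #A := by
    apply Complex.ofReal_injective
    rw [← purity_A, hA]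
    push_cast
    rfl
  have card_fun : ∀ S : Finset (Fin n), (Fintype.card (S → ZMod d) : ℝ) = (d : ℝ) ^ #S := by
    simp only [Fintype.card_fun, ZMod.card, Fintype.card_coe, Nat.cast_pow, implies_true]
  have hd : (d : ℝ) ≠ 0 := NeZero.ne _
  have purity_M : M.bipartitePurity = 1 / (d : ℝ) ^ #B := by
    refine le_antisymm ?_ (by simpa [card_fun] using M.inv_card_le_bipartitePurity normalized)
    calc M.bipartitePurity ≤ _ := M.bipartitePurity_le_card_mul
      _ = (d : ℝ) ^ #(A \ B) * N.bipartitePurity := by rw [card_fun]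
      _ = (d : ℝ) ^ #(A \ B) * (1 / (d : ℝ) ^ (#(A \ B) + #B)) := by
        rw [purity_N, card_sdiff_add_card_eq_card hBA]
      _ = 1 / (d : ℝ) ^ #B := by rw [pow_add]; field_simp
  rw [purity_B, purity_M]
  push_cast
  rfl

theorem minimal_purity_subset_general (d n : ℕ) [NeZero d]
    (z : (Fin n → ZMod d) → ℂ) (hz : IsPureState z) :
    (∀ A B : Finset (Fin n), B ⊆ A →
        purity A z = 1 / (d : ℂ) ^ A.card → purity B z = 1 / (d : ℂ) ^ B.card) ∧
      ((∀ A : Finset (Fin n), A.card = n / 2 → purity A z = 1 / (d : ℂ) ^ (n / 2)) →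
        ∀ B : Finset (Fin n), B.card ≤ n / 2 → purity B z = 1 / (d : ℂ) ^ B.card) := by
  refine ⟨fun A B hBA hA => purity_eq_one_div_pow_card_of_subset hBA hz hA, fun balanced B hB => ?_⟩
  obtain ⟨A, hBA, hA⟩ := exists_superset_card_eq hB (by simpa using n.div_le_self 2)
  exact purity_eq_one_div_pow_card_of_subset hBA hz (hA ▸ balanced A hA)

/-- If the purity of a pure state `z` is minimal for `A`
(`π_A(z) = 1/d^{|A|}`) then it is minimal for every `B ⊆ A`; in particular a state with
minimal purity for every balanced bipartition has minimal purity for every bipartition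
with `|B| ≤ ⌊n/2⌋`. -/
theorem minimal_purity_subset (d n : ℕ) [NeZero d] (hd : 2 ≤ d) (hn : 1 ≤ n)
    (z : (Fin n → ZMod d) → ℂ) (hz : IsPureState z) :
    (∀ A B : Finset (Fin n), B ⊆ A →
        purity A z = 1 / (d : ℂ) ^ A.card → purity B z = 1 / (d : ℂ) ^ B.card) ∧
      ((∀ A : Finset (Fin n), A.card = n / 2 → purity A z = 1 / (d : ℂ) ^ (n / 2)) →
        ∀ B : Finset (Fin n), B.card ≤ n / 2 → purity B z = 1 / (d : ℂ) ^ B.card) :=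
  minimal_purity_subset_general d n z hz
end
end

section
/- Codes give perfect MMES: let C ⊆ (ZMod d)^n be a set of codewords with |C| = d^{⌊n/2⌋} whose pairwise Hamming distance satisfies d_H(v,w) ≥ ⌈n/2⌉ + 1 for all distinct v, w ∈ C. Define the pure state z by z_k = 1/√|C| if k ∈ C and z_k = 0 otherwise. Then for every subset A ⊆ {1,…,n} with |A| = ⌊n/2⌋ the purity is minimal, π_A(z) = 1/d^{⌊n/2⌋}; hence z is a perfect multipartite maximally entangled state and π_ME(z) = 1/d^{⌊n/2⌋}. -/
open scoped BigOperators Classical ComplexOrder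
open Finset MeasureTheory

noncomputable section

/-!
The code is MDS: it has `d ^ m` words, `m = ⌊n/2⌋`, and distance `n - m + 1`, so a codeword is
determined by its restriction to any `m` positions. Hence restriction to an `m`-set `B` is a
bijection `C ≃ (B → ZMod d)`, and for `|A| ≤ m` every fiber of the restriction to `A` has exactly
`d ^ (m - |A|)` codewords. For the uniform superposition over `C`, the indicators
`[k_Ā = l_Ā]`, `[k'_Ā = l'_Ā]` force `l = k`, `l' = k'` because `|Ā| ≥ m`, so the purity counts
the pairs of codewords agreeing on `A`: `π_A = |C| d ^ (m - |A|) / |C| ^ 2 = d ^ (-|A|)`.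
-/

section Code

variable {ι α : Type*} [Fintype ι] [DecidableEq ι] [DecidableEq α]

theorem hammingDist_le_card_compl_of_eqOn {s : Finset ι} {v w : ι → α}
    (h : ∀ i ∈ s, v i = w i) : hammingDist v w ≤ #sᶜ :=
  card_le_card fun i hi => mem_compl.2 fun his => (mem_filter.1 hi).2 (h i his)

variable {C : Finset (ι → α)} {m : ℕ}

theorem eq_of_eqOn_of_le_card
    (hdist : ∀ v ∈ C, ∀ w ∈ C, v ≠ w → Fintype.card ι - m < hammingDist v w)
    {v w : ι → α} (hv : v ∈ C) (hw : w ∈ C) {s : Finset ι} (hs : m ≤ #s)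
    (h : ∀ i ∈ s, v i = w i) : v = w := by
  by_contra hne
  have hle := hammingDist_le_card_compl_of_eqOn h
  rw [card_compl] at hle
  have hlt := hdist v hv w hw hne
  omega

variable [Fintype α]

theorem card_filter_eqOn (s : Finset ι) (k : ι → α) :
    #{g : ι → α | ∀ i ∈ s, g i = k i} = Fintype.card α ^ #sᶜ := by
  have hpi : ({g : ι → α | ∀ i ∈ s, g i = k i} : Finset _) =
      Fintype.piFinset fun i => if i ∈ s then {k i} else univ := by
    ext g
    simp only [mem_filter, mem_univ, true_and, Fintype.mem_piFinset]
    refine forall_congr' fun i => ?_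
    split_ifs with hi <;> simp [hi]
  rw [hpi, Fintype.card_piFinset]
  simp only [apply_ite card, card_singleton, card_univ, prod_ite, prod_const_one, one_mul,
    prod_const]
  congr 2
  ext
  simp

theorem card_filter_eqOn_of_card_eq_pow (hcard : #C = Fintype.card α ^ m)
    (hdist : ∀ v ∈ C, ∀ w ∈ C, v ≠ w → Fintype.card ι - m < hammingDist v w)
    {A : Finset ι} (hA : #A ≤ m) (hm : m ≤ Fintype.card ι) (k : ι → α) :
    #{c ∈ C | ∀ i ∈ A, c i = k i} = Fintype.card α ^ (m - #A) := by
  obtain ⟨B, hAB, -, hB⟩ := exists_subsuperset_card_eq (subset_univ A) hA hm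
  have hinj : Set.InjOn B.restrict C := fun v hv w hw h =>
    eq_of_eqOn_of_le_card hdist hv hw hB.ge fun i hi => congrFun h ⟨i, hi⟩
  have himage : C.image B.restrict = univ := by
    refine eq_univ_of_card _ ?_
    rw [card_image_of_injOn hinj, hcard, Fintype.card_fun, Fintype.card_coe, hB]
  set p : (B → α) → Prop := fun g => ∀ i ∈ A.subtype (· ∈ B), g i = B.restrict k i
  have hfilter : {c ∈ C | ∀ i ∈ A, c i = k i} = {c ∈ C | p (B.restrict c)} :=
    filter_congr fun c _ => ⟨fun h i hi => h i (mem_subtype.1 hi),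
      fun h i hi => h ⟨i, hAB hi⟩ (mem_subtype.2 hi)⟩
  calc #{c ∈ C | ∀ i ∈ A, c i = k i}
      = #((C.image B.restrict).filter p) := by
        rw [filter_image, card_image_of_injOn (hinj.mono (filter_subset _ _)), hfilter]
    _ = Fintype.card α ^ (m - #A) := by
        rw [himage, card_filter_eqOn, card_compl, card_subtype, filter_true_of_mem hAB,
          Fintype.card_coe, hB]

end Code

section Purity

variable {d n : ℕ} {A : Finset (Fin n)} {C : Finset (Fin n → ZMod d)}

theorem agree_comm (A : Finset (Fin n)) (k l : Fin n → ZMod d) :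
    agree A k l = agree A l k := by
  simp only [agree, eq_comm]

theorem agree_mul_self (A : Finset (Fin n)) (k l : Fin n → ZMod d) :
    agree A k l * agree A k l = agree A k l := by
  unfold agree
  split_ifs <;> norm_num

theorem agree_eq_ite_of_injOn (hC : ∀ k ∈ C, ∀ l ∈ C, (∀ j ∈ A, k j = l j) → k = l)
    {k l : Fin n → ZMod d} (hk : k ∈ C) (hl : l ∈ C) :
    agree A k l = if k = l then 1 else 0 := by
  by_cases h : k = l
  · simp [agree, h]
  · simp only [agree, h, if_false]
    exact if_neg fun hkl => h (hC k hk l hl hkl)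

theorem sum_agree_eq_sum_card (hC : ∀ k ∈ C, ∀ l ∈ C, (∀ j ∈ Aᶜ, k j = l j) → k = l) :
    ∑ k ∈ C, ∑ k' ∈ C, ∑ l ∈ C, ∑ l' ∈ C,
        agree A k' l * agree A k l' * agree Aᶜ k l * agree Aᶜ k' l' =
      ∑ k ∈ C, (#{k' ∈ C | ∀ j ∈ A, k' j = k j} : ℝ) := by
  refine sum_congr rfl fun k hk => ?_
  calc _ = ∑ k' ∈ C, agree A k' k := by
        refine sum_congr rfl fun k' hk' => ?_
        rw [sum_congr rfl fun l hl => sum_congr rfl fun l' hl' => by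
          rw [agree_eq_ite_of_injOn hC hk hl, agree_eq_ite_of_injOn hC hk' hl']]
        simp only [mul_ite, mul_one, mul_zero, sum_ite_eq, hk, hk', if_true]
        rw [agree_comm A k k', agree_mul_self]
    _ = _ := by
        simp only [agree]
        rw [sum_boole]

variable [NeZero d]

theorem purity_indicator (A : Finset (Fin n)) (C : Finset (Fin n → ZMod d)) (c : ℝ) :
    purity A (fun k => if k ∈ C then (c : ℂ) else 0) =
      ((c ^ 4 * ∑ k ∈ C, ∑ k' ∈ C, ∑ l ∈ C, ∑ l' ∈ C,
        agree A k' l * agree A k l' * agree Aᶜ k l * agree Aᶜ k' l' : ℝ) : ℂ) := by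
  simp only [purity, apply_ite (starRingEnd ℂ), Complex.conj_ofReal, map_zero, ite_mul, mul_ite,
    zero_mul, mul_zero, sum_ite_irrel, sum_const_zero, Fintype.sum_ite_mem]
  push_cast
  simp only [mul_sum]
  refine sum_congr rfl fun k _ => sum_congr rfl fun k' _ => sum_congr rfl fun l _ =>
    sum_congr rfl fun l' _ => by ring

theorem purity_uniform_mds {m : ℕ} (hcard : #C = d ^ m)
    (hdist : ∀ v ∈ C, ∀ w ∈ C, v ≠ w → n - m < hammingDist v w)
    (hA : #A ≤ m) (hAc : m ≤ n - #A) :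
    purity A (fun k => if k ∈ C then ((1 / √(#C : ℝ) : ℝ) : ℂ) else 0) = 1 / (d : ℂ) ^ #A := by
  have hmds : ∀ v ∈ C, ∀ w ∈ C, v ≠ w → Fintype.card (Fin n) - m < hammingDist v w := by
    simpa only [Fintype.card_fin] using hdist
  have hC : ∀ k ∈ C, ∀ l ∈ C, (∀ j ∈ Aᶜ, k j = l j) → k = l := fun k hk l hl =>
    eq_of_eqOn_of_le_card hmds hk hl (by rwa [card_compl, Fintype.card_fin])
  have hfiber (k : Fin n → ZMod d) : #{k' ∈ C | ∀ j ∈ A, k' j = k j} = d ^ (m - #A) := by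
    -- `convert` also bridges the `Decidable` instances `Nat.decidableForallFin` and
    -- `Fintype.decidableForallFintype` of the two filters
    convert card_filter_eqOn_of_card_eq_pow (by rwa [ZMod.card]) hmds hA (by simp; omega) k using 3
    exact (ZMod.card d).symm
  have hc : (1 / √(#C : ℝ)) ^ 4 = 1 / (#C : ℝ) ^ 2 := by
    rw [div_pow, one_pow, show 4 = 2 * 2 from rfl, pow_mul, Real.sq_sqrt (Nat.cast_nonneg _)]
  obtain ⟨r, rfl⟩ := Nat.exists_eq_add_of_le hA
  rw [purity_indicator, sum_agree_eq_sum_card hC, hc]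
  simp only [hfiber, sum_const, nsmul_eq_mul, hcard, Nat.add_sub_cancel_left]
  have hd : (d : ℂ) ≠ 0 := Nat.cast_ne_zero.2 (NeZero.ne d)
  push_cast
  rw [pow_add]
  field_simp

end Purity

theorem piME_eq_of_forall_purity_eq {d n : ℕ} [NeZero d] {z : (Fin n → ZMod d) → ℂ} {p : ℂ}
    (h : ∀ A : Finset (Fin n), #A = n / 2 → purity A z = p) : piME z = p := by
  have hchoose : (n.choose (n / 2) : ℂ) ≠ 0 :=
    Nat.cast_ne_zero.2 (Nat.choose_pos (Nat.div_le_self n 2)).ne'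
  rw [piME, sum_congr rfl fun A hA => h A (mem_powersetCard_univ.1 hA), sum_const,
    card_powersetCard, card_univ, Fintype.card_fin, nsmul_eq_mul, inv_mul_cancel_left₀ hchoose]

theorem code_perfect_mmes_general (d n : ℕ) [NeZero d]
    (C : Finset (Fin n → ZMod d)) (hcard : C.card = d ^ (n / 2))
    (hdist : ∀ v ∈ C, ∀ w ∈ C, v ≠ w → (n + 1) / 2 + 1 ≤ hammingDist v w)
    (z : (Fin n → ZMod d) → ℂ)
    (hzdef : z = fun k => if k ∈ C then ((1 / Real.sqrt (C.card : ℝ) : ℝ) : ℂ) else 0) :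
    (∀ A : Finset (Fin n), A.card = n / 2 → purity A z = 1 / (d : ℂ) ^ (n / 2)) ∧
      (∀ A : Finset (Fin n), A.card ≤ n - A.card → purity A z = 1 / (d : ℂ) ^ A.card) ∧
      piME z = 1 / (d : ℂ) ^ (n / 2) := by
  have hmds : ∀ v ∈ C, ∀ w ∈ C, v ≠ w → n - n / 2 < hammingDist v w :=
    fun v hv w hw hne => by have := hdist v hv w hw hne; omega
  have hperfect (A : Finset (Fin n)) (hA : #A ≤ n - #A) :
      purity A z = 1 / (d : ℂ) ^ #A :=
    hzdef ▸ purity_uniform_mds hcard hmds (by omega) (by omega)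
  have hbalanced (A : Finset (Fin n)) (hA : #A = n / 2) :
      purity A z = 1 / (d : ℂ) ^ (n / 2) := by
    rw [hperfect A (by omega), hA]
  exact ⟨hbalanced, hperfect, piME_eq_of_forall_purity_eq hbalanced⟩

/-- Codes give perfect MMES. If `C ⊆ (ZMod d)^n` has `|C| = d^{⌊n/2⌋}`
codewords with pairwise Hamming distance at least `⌈n/2⌉ + 1`, then the uniform
superposition over `C` has minimal purity `1/d^{⌊n/2⌋}` for every balanced bipartition;
hence it is a perfect MMES and `π_ME = 1/d^{⌊n/2⌋}`. -/
theorem code_perfect_mmes (d n : ℕ) [NeZero d] (hd : 2 ≤ d) (hn : 1 ≤ n)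
    (C : Finset (Fin n → ZMod d)) (hcard : C.card = d ^ (n / 2))
    (hdist : ∀ v ∈ C, ∀ w ∈ C, v ≠ w → (n + 1) / 2 + 1 ≤ hammingDist v w)
    (z : (Fin n → ZMod d) → ℂ)
    (hzdef : z = fun k => if k ∈ C then ((1 / Real.sqrt (C.card : ℝ) : ℝ) : ℂ) else 0) :
    (∀ A : Finset (Fin n), A.card = n / 2 → purity A z = 1 / (d : ℂ) ^ (n / 2)) ∧
      (∀ A : Finset (Fin n), A.card ≤ n - A.card → purity A z = 1 / (d : ℂ) ^ A.card) ∧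
      piME z = 1 / (d : ℂ) ^ (n / 2) :=
  code_perfect_mmes_general d n C hcard hdist z hzdef
end
end
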